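/- arXiv:0805.2043 — 4 statements merged into one kernel-verified Lean document; each statement's English description precedes it below -/
import Mathlib

section
/- Let X be a Banach space and Y a closed subspace of X such that the quotient X/Y has the Schur property. If Y is non-universal (i.e. Y contains no isomorphic copy of C(2^ℕ)), then X is non-universal. -/
open Filter Topology MeasureTheory

noncomputable section

/-! ### The Cantor set and the space `C(2^ℕ)` -/

/-- The Cantor set `2^ℕ`. -/
abbrev CantorSet : Type := ℕ → Bool

/-- The Banach space `C(2^ℕ)` of continuous real-valued functions on the Cantor set. -/
abbrev CantorC : Type := C(CantorSet, ℝ)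

/-! ### The standard Borel space `SB` of separable Banach spaces -/

/-- `SB`: the set of closed linear subspaces of `C(2^ℕ)`. -/
def SB : Type := {Y : Submodule ℝ CantorC // IsClosed (Y : Set CantorC)}

/-- The Effros-Borel σ-algebra on `SB`, generated by the sets
`{Y : Y ∩ U ≠ ∅}` for `U` open in `C(2^ℕ)`. -/
instance : MeasurableSpace SB :=
  MeasurableSpace.generateFrom
    {A : Set SB | ∃ U : Set CantorC, IsOpen U ∧ A = {Y : SB | ((Y.1 : Set CantorC) ∩ U).Nonempty}}

/-- A subset of a standard Borel space is analytic if it is the image of a Borel map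
from the Baire space `ℕ^ℕ`. -/
def IsAnalyticIn {α : Type*} [MeasurableSpace α] (A : Set α) : Prop :=
  ∃ f : (ℕ → ℕ) → α, Measurable f ∧ A = Set.range f

/-! ### Embeddings, isomorphisms, universality -/

/-- `X` embeds isomorphically into `Y`: there is a bounded linear map which is
bounded below, i.e. an isomorphism onto its range. -/
def Embeds (X Y : Type*) [SeminormedAddCommGroup X] [NormedSpace ℝ X]
    [SeminormedAddCommGroup Y] [NormedSpace ℝ Y] : Prop :=
  ∃ (T : X →L[ℝ] Y) (c : ℝ), 0 < c ∧ ∀ x : X, c * ‖x‖ ≤ ‖T x‖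

/-- `X` embeds isometrically into `Y` (i.e. `Y` contains an isometric copy of `X`). -/
def EmbedsIsometrically (X Y : Type*) [SeminormedAddCommGroup X] [NormedSpace ℝ X]
    [SeminormedAddCommGroup Y] [NormedSpace ℝ Y] : Prop :=
  Nonempty (X →ₗᵢ[ℝ] Y)

/-- `X` and `Y` are isomorphic Banach spaces (linearly homeomorphic). -/
def IsomorphicTo (X Y : Type*) [SeminormedAddCommGroup X] [NormedSpace ℝ X]
    [SeminormedAddCommGroup Y] [NormedSpace ℝ Y] : Prop :=
  Nonempty (X ≃L[ℝ] Y)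

/-- The class `NU ⊆ SB` of non-universal spaces: those `X ∈ SB` which do not contain
an isomorphic copy of `C(2^ℕ)` (equivalently, are not universal for all separable
Banach spaces). -/
def NU : Set SB := {Y : SB | ¬ Embeds CantorC Y.1}

/-- The class `NC_X ⊆ SB` of all `Y ∈ SB` containing no isomorphic copy of `X`. -/
def NCin (X : Type*) [SeminormedAddCommGroup X] [NormedSpace ℝ X] : Set SB :=
  {Y : SB | ¬ Embeds X Y.1}

/-! ### Schauder bases -/

/-- `x` is a Schauder basis of `E`: every vector has a unique representation as a
norm convergent series `Σ aₙ • xₙ`. -/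
def IsSchauderBasis {E : Type*} [SeminormedAddCommGroup E] [NormedSpace ℝ E]
    (x : ℕ → E) : Prop :=
  ∀ y : E, ∃! a : ℕ → ℝ,
    Tendsto (fun m => ∑ n ∈ Finset.range m, a n • x n) atTop (𝓝 y)

/-- `E` has a Schauder basis. -/
def HasSchauderBasis (E : Type*) [SeminormedAddCommGroup E] [NormedSpace ℝ E] : Prop :=
  ∃ x : ℕ → E, IsSchauderBasis x

/-- `x` is a monotone basis sequence: initial-segment projections have norm at most 1. -/
def IsMonotoneSeq {E : Type*} [SeminormedAddCommGroup E] [NormedSpace ℝ E]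
    (x : ℕ → E) : Prop :=
  ∀ (a : ℕ → ℝ) (k m : ℕ), k ≤ m →
    ‖∑ n ∈ Finset.range k, a n • x n‖ ≤ ‖∑ n ∈ Finset.range m, a n • x n‖

/-- `x` is a bi-monotone sequence: interval projections have norm at most 1. -/
def IsBimonotoneSeq {E : Type*} [SeminormedAddCommGroup E] [NormedSpace ℝ E]
    (x : ℕ → E) : Prop :=
  ∀ (a : ℕ → ℝ) (j k m : ℕ), j ≤ k → k ≤ m →
    ‖∑ n ∈ Finset.Ico j k, a n • x n‖ ≤ ‖∑ n ∈ Finset.range m, a n • x n‖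

/-- `x` is a Schauder basic sequence: it is a Schauder basis of its closed linear span. -/
def IsSchauderBasicSeq {E : Type*} [NormedAddCommGroup E] [NormedSpace ℝ E]
    (x : ℕ → E) : Prop :=
  ∀ y ∈ (Submodule.span ℝ (Set.range x)).topologicalClosure,
    ∃! a : ℕ → ℝ,
      Tendsto (fun m => ∑ n ∈ Finset.range m, a n • x n) atTop (𝓝 y)

/-! ### Trees, ordinal ranks and Bourgain's index -/

/-- A tree on `Λ`: a set of finite sequences closed under initial segments. -/
def IsTree {Λ : Type*} (T : Set (List Λ)) : Prop :=
  ∀ s t : List Λ, s <+: t → t ∈ T → s ∈ T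

/-- A pruned tree: every node has a proper extension in the tree. -/
def IsPruned {Λ : Type*} (T : Set (List Λ)) : Prop :=
  ∀ t ∈ T, ∃ a : Λ, t ++ [a] ∈ T

/-- `σ` is an infinite branch of `T`. -/
def IsBranch {Λ : Type*} (T : Set (List Λ)) (σ : ℕ → Λ) : Prop :=
  ∀ n : ℕ, (List.ofFn fun i : Fin n => σ i) ∈ T

/-- `T` is ill-founded: it has an infinite branch. -/
def TreeIllFounded {Λ : Type*} (T : Set (List Λ)) : Prop :=
  ∃ σ : ℕ → Λ, IsBranch T σ

/-- The derivative of a tree: its non-maximal nodes, i.e. nodes having a proper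
extension in the tree. -/
def treeDeriv {Λ : Type*} (T : Set (List Λ)) : Set (List Λ) :=
  {l | l ∈ T ∧ ∃ a : Λ, l ++ [a] ∈ T}

/-- The iterated derivatives `T^(ξ)` of a tree, defined by transfinite recursion. -/
def treeDerivIter {Λ : Type*} (T : Set (List Λ)) (ξ : Ordinal.{0}) : Set (List Λ) :=
  Ordinal.limitRecOn ξ T (fun _ S => treeDeriv S)
    (fun o _ ih => ⋂ (o' : Ordinal.{0}) (h : o' < o), ih o' h)

/-- The ordinal rank `o(T)` of a (well-founded) tree: the least `ξ` with `T^(ξ) = ∅`. -/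
def treeRank {Λ : Type*} (T : Set (List Λ)) : Ordinal.{0} :=
  sInf {ξ : Ordinal.{0} | treeDerivIter T ξ = ∅}

/-- The first uncountable ordinal `ω₁`. -/
def omega1 : Ordinal.{0} := (Cardinal.aleph 1).ord

/-- Bourgain's tree `T(Y, (e_n), δ)`: all finite sequences `(y_0, …, y_k)` in `Y`
which are `δ`-equivalent to `(e_0, …, e_k)`. -/
def bourgainTree {W : Type*} [SeminormedAddCommGroup W] [NormedSpace ℝ W] (e : ℕ → W)
    (δ : ℝ) (Y : Type*) [SeminormedAddCommGroup Y] [NormedSpace ℝ Y] : Set (List Y) :=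
  {l : List Y | ∀ a : ℕ → ℝ,
    δ * ‖∑ i ∈ Finset.range l.length, a i • e i‖ ≤
        ‖∑ i ∈ Finset.range l.length, a i • l.getD i 0‖ ∧
    ‖∑ i ∈ Finset.range l.length, a i • l.getD i 0‖ ≤
        δ⁻¹ * ‖∑ i ∈ Finset.range l.length, a i • e i‖}

open Classical in
/-- Bourgain's ordinal index of `Y` relative to a (normalized Schauder) basis `(e_n)`
of a space `W`: it equals `ω₁` if some tree `T(Y, (e_n), δ)` is ill-founded, and
otherwise `sup_{0 < δ ≤ 1} o(T(Y, (e_n), δ))`.  With `W = C(2^ℕ)` this is `φ_NU`,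
and with `W = Z` it is `φ_{NC_Z}`. -/
def bourgainIndex {W : Type*} [SeminormedAddCommGroup W] [NormedSpace ℝ W] (e : ℕ → W)
    (Y : Type*) [SeminormedAddCommGroup Y] [NormedSpace ℝ Y] : Ordinal.{0} :=
  if ∃ δ ∈ Set.Ioc (0:ℝ) 1, TreeIllFounded (bourgainTree e δ Y) then omega1
  else ⨆ δ : Set.Ioc (0:ℝ) 1, treeRank (bourgainTree e δ.1 Y)

/-! ### The Schur property and the Radon-Nikodym property -/

/-- `X` has the Schur property: weakly convergent sequences are norm convergent. -/
def HasSchurProperty (X : Type*) [SeminormedAddCommGroup X] [NormedSpace ℝ X] : Prop :=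
  ∀ (f : ℕ → X) (x : X),
    (∀ φ : X →L[ℝ] ℝ, Tendsto (fun n => φ (f n)) atTop (𝓝 (φ x))) →
    Tendsto f atTop (𝓝 x)

/-- `X` has the Radon-Nikodym property: on every finite measure space, every
`X`-valued vector measure of bounded variation which is absolutely continuous
with respect to the measure has a Bochner-integrable density. -/
def HasRNP (X : Type*) [NormedAddCommGroup X] [NormedSpace ℝ X] : Prop :=
  ∀ (Ω : Type) [MeasurableSpace Ω] (μ : Measure Ω), IsFiniteMeasure μ →
    ∀ τ : VectorMeasure Ω X,
      (∀ s : Set Ω, MeasurableSet s → μ s = 0 → τ s = 0) →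
      (∃ C : ℝ, ∀ P : Finset (Set Ω), (∀ s ∈ P, MeasurableSet s) →
        ((P : Set (Set Ω)).Pairwise fun s t => Disjoint s t) →
        ∑ s ∈ P, ‖τ s‖ ≤ C) →
      ∃ g : Ω → X, Integrable g μ ∧
        ∀ s : Set Ω, MeasurableSet s → τ s = ∫ x in s, g x ∂μ

/-! ### `𝓛_{∞,λ}`-spaces -/

/-- The Banach-Mazur distance from `G` to `ℓ∞^n` is at most `θ`, witnessed by an
isomorphism `e` with `‖e‖ ⬝ ‖e⁻¹‖ ≤ θ'` for every `θ' > θ`. -/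
def BMdistToLinftyLE (G : Type*) [SeminormedAddCommGroup G] [NormedSpace ℝ G]
    (n : ℕ) (θ : ℝ) : Prop :=
  ∀ θ' : ℝ, θ < θ' → ∃ e : G ≃L[ℝ] (Fin n → ℝ),
    ‖(e : G →L[ℝ] (Fin n → ℝ))‖ * ‖(e.symm : (Fin n → ℝ) →L[ℝ] G)‖ ≤ θ'

/-- `X` is an (infinite-dimensional) `𝓛_{∞,λ}`-space: every finite-dimensional subspace
`F` of `X` is contained in a finite-dimensional subspace `G` with `d(G, ℓ∞^(dim G)) ≤ λ`. -/
def IsLinftyLam (lam : ℝ) (X : Type*) [NormedAddCommGroup X] [NormedSpace ℝ X] : Prop :=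
  (¬ FiniteDimensional ℝ X) ∧
  ∀ F : Submodule ℝ X, FiniteDimensional ℝ F →
    ∃ G : Submodule ℝ X, F ≤ G ∧ FiniteDimensional ℝ G ∧
      BMdistToLinftyLE G (Module.finrank ℝ G) lam

/-- `X` is an `𝓛_{∞,λ+}`-space: it is an `𝓛_{∞,θ}`-space for every `θ > λ`. -/
def IsLinftyPlus (lam : ℝ) (X : Type*) [NormedAddCommGroup X] [NormedSpace ℝ X] : Prop :=
  ∀ θ : ℝ, lam < θ → IsLinftyLam θ X

/-! ### Minimal spaces and `ℓ₁` -/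

/-- The space `ℓ₁`. -/
abbrev EllOne : Type := lp (fun _ : ℕ => ℝ) 1

/-- `X` is a minimal Banach space: it is infinite-dimensional and embeds isomorphically
into every infinite-dimensional (closed) subspace of itself. -/
def IsMinimal (X : Type*) [NormedAddCommGroup X] [NormedSpace ℝ X] : Prop :=
  (¬ FiniteDimensional ℝ X) ∧
  ∀ Z : Submodule ℝ X, IsClosed (Z : Set X) → ¬ FiniteDimensional ℝ Z → Embeds X Z

end

/-!
Let `T : C(2^ℕ) → X` be bounded below by `c > 0`. Indicators of pairwise disjoint clopen sets
form a weakly null sequence, so by the Schur property of `X ⧸ Y` their images under `T` come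
arbitrarily close to `Y`. Splitting clopen sets in this way along the dyadic tree gives nonempty
clopen sets `B n s`, disjoint on each level, and vectors `y n s ∈ Y` that are additive along the
tree with `∑ₛ ‖y n s - T 1_{B n s}‖ ≤ c / 2` on every level. The operators
`f ↦ ∑ₛ f(xₛ) • y n s` are uniformly bounded and eventually constant on functions depending on
finitely many coordinates, so they converge pointwise to an operator `C(2^ℕ) → Y`. As
`f ↦ ∑ₛ f(xₛ) • 1_{B n s}` is isometric on functions of the first `n` coordinates, the limit is
bounded below by `c / 2`.
-/

open TopologicalSpace Function

namespace TopologicalSpace.Clopens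

variable {α : Type*} [TopologicalSpace α]

noncomputable def indicator (U : Clopens α) : C(α, ℝ) :=
  LocallyConstant.charFn ℝ U.isClopen

lemma coe_indicator (U : Clopens α) : ⇑U.indicator = Set.indicator U 1 := rfl

lemma support_indicator (U : Clopens α) : support U.indicator = U := by
  simp [coe_indicator, Set.support_indicator]

lemma indicator_sdiff {U V : Clopens α} (h : V ≤ U) :
    (U \ V).indicator = U.indicator - V.indicator := by
  ext z
  simp only [ContinuousMap.sub_apply, coe_indicator, coe_sdiff]
  exact congrFun (Set.indicator_sdiff (SetLike.coe_subset_coe.2 h) 1) z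

lemma norm_indicator_le [CompactSpace α] (U : Clopens α) : ‖U.indicator‖ ≤ 1 := by
  refine (ContinuousMap.norm_le _ zero_le_one).2 fun z => ?_
  by_cases hz : z ∈ U <;> simp [coe_indicator, hz]

end TopologicalSpace.Clopens

section DisjointSupport

variable {α : Type*} [TopologicalSpace α] [CompactSpace α]

lemma ContinuousMap.norm_sum_smul_le_of_pairwise_disjoint_support {ι : Type*} (s : Finset ι)
    {g : ι → C(α, ℝ)} (hg : ∀ i ∈ s, ‖g i‖ ≤ 1)
    (hd : Pairwise (Disjoint on fun i => support (g i)))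
    {c : ι → ℝ} {M : ℝ} (hM : 0 ≤ M) (hc : ∀ i ∈ s, |c i| ≤ M) :
    ‖∑ i ∈ s, c i • g i‖ ≤ M := by
  refine (ContinuousMap.norm_le _ hM).2 fun z => ?_
  simp only [ContinuousMap.coe_sum, ContinuousMap.coe_smul, Finset.sum_apply, Pi.smul_apply,
    smul_eq_mul, Real.norm_eq_abs]
  by_cases hz : ∃ i ∈ s, z ∈ support (g i)
  · obtain ⟨i, hi, hzi⟩ := hz
    have hzj : ∀ j ∈ s, j ≠ i → g j z = 0 := fun j hj hji =>
      notMem_support.1 fun hzj => Set.disjoint_left.1 (hd hji) hzj hzi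
    rw [Finset.sum_eq_single_of_mem i hi fun j hj hji => by rw [hzj j hj hji, mul_zero], abs_mul]
    calc |c i| * |g i z| ≤ M * 1 := by
          gcongr
          · exact hc i hi
          · exact (Real.norm_eq_abs _ ▸ (g i).norm_coe_le_norm z).trans (hg i hi)
      _ = M := mul_one M
  · simp only [not_exists, not_and, notMem_support] at hz
    rw [Finset.sum_eq_zero fun i hi => by rw [hz i hi, mul_zero], abs_zero]
    exact hM

lemma ContinuousMap.tendsto_apply_of_pairwise_disjoint_support {g : ℕ → C(α, ℝ)}
    (hg : ∀ j, ‖g j‖ ≤ 1) (hd : Pairwise (Disjoint on fun j => support (g j)))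
    (φ : C(α, ℝ) →L[ℝ] ℝ) : Tendsto (fun j => φ (g j)) atTop (𝓝 0) := by
  have hsum : ∀ n, ∑ j ∈ Finset.range n, |φ (g j)| ≤ ‖φ‖ := fun n => by
    have hsign : ∀ j, |(SignType.sign (φ (g j)) : ℝ)| ≤ 1 := fun j => by
      cases SignType.sign (φ (g j)) <;> simp
    calc ∑ j ∈ Finset.range n, |φ (g j)|
        = φ (∑ j ∈ Finset.range n, (SignType.sign (φ (g j)) : ℝ) • g j) := by
          simp [map_sum, sign_mul_self]
      _ ≤ ‖φ‖ * ‖∑ j ∈ Finset.range n, (SignType.sign (φ (g j)) : ℝ) • g j‖ :=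
          (le_abs_self _).trans (φ.le_opNorm _)
      _ ≤ ‖φ‖ * 1 := by
          gcongr
          exact ContinuousMap.norm_sum_smul_le_of_pairwise_disjoint_support _ (fun j _ => hg j)
            hd zero_le_one fun j _ => hsign j
      _ = ‖φ‖ := mul_one _
  exact tendsto_zero_iff_abs_tendsto_zero _ |>.2
    (summable_of_sum_range_le (fun _ => abs_nonneg _) hsum).tendsto_atTop_zero

end DisjointSupport

lemma Metric.isClosed_setOf_cauchySeq_of_lipschitzWith {α β : Type*} [PseudoMetricSpace α]
    [PseudoMetricSpace β] {F : ℕ → α → β} {K : NNReal}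
    (hF : ∀ n, LipschitzWith K (F n)) :
    IsClosed {x | CauchySeq fun n => F n x} := by
  refine isClosed_iff_clusterPt.2 fun x hx => Metric.cauchySeq_iff'.2 fun r hr => ?_
  have hKr : 0 < r / (3 * (K + 1)) := by positivity
  obtain ⟨x', hx', hxx'⟩ :=
    (mem_closure_iff_clusterPt.2 hx |> Metric.mem_closure_iff.1) _ hKr
  obtain ⟨N, hN⟩ := Metric.cauchySeq_iff'.1 hx' (r / 3) (by positivity)
  have hclose (n : ℕ) : dist (F n x) (F n x') ≤ K * (r / (3 * (K + 1))) :=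
    ((hF n).dist_le_mul x x').trans (by gcongr)
  have hK : (K : ℝ) * (r / (3 * (K + 1))) < r / 3 := by
    rw [mul_div_assoc', div_lt_div_iff₀ (by positivity) (by positivity)]
    nlinarith [K.coe_nonneg]
  refine ⟨N, fun n hn => ?_⟩
  calc dist (F n x) (F N x)
      ≤ dist (F n x) (F n x') + dist (F n x') (F N x') + dist (F N x') (F N x) :=
        dist_triangle4 _ _ _ _
    _ < r / 3 + r / 3 + r / 3 := by
        gcongr
        · exact (hclose n).trans_lt hK
        · exact hN n hn
        · exact (dist_comm (F N x) (F N x') ▸ hclose N).trans_lt hK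
    _ = r := by ring

lemma HasSchurProperty.tendsto_infDist_of_weakly_tendsto_zero {X : Type*}
    [NormedAddCommGroup X] [NormedSpace ℝ X] {Y : Submodule ℝ X}
    (hS : HasSchurProperty (X ⧸ Y))
    {x : ℕ → X} (hx : ∀ φ : X →L[ℝ] ℝ, Tendsto (fun j => φ (x j)) atTop (𝓝 0)) :
    Tendsto (fun j => Metric.infDist (x j) Y) atTop (𝓝 0) := by
  have hq := hS (fun j => Y.mkQL (x j)) 0 fun φ => by simpa using hx (φ.comp Y.mkQL)
  convert hq.norm using 2 with j
  · exact (QuotientAddGroup.norm_mk (S := Y.toAddSubgroup) (x j)).symm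
  · simp

lemma PiNat.isClopen_cylinder {E : Type*} [TopologicalSpace E] [DiscreteTopology E]
    (x : ℕ → E) (n : ℕ) : IsClopen (PiNat.cylinder x n) :=
  ⟨by rw [PiNat.cylinder_eq_pi]; exact isClosed_set_pi fun i _ => isClosed_discrete _,
    PiNat.isOpen_cylinder _ x n⟩

lemma exists_pairwise_disjoint_clopens_le {E : Type*} [TopologicalSpace E] [DiscreteTopology E]
    [Nontrivial E] {V : Clopens (ℕ → E)} (hV : (V : Set (ℕ → E)).Nonempty) :
    ∃ C : ℕ → Clopens (ℕ → E), (∀ j, C j ≤ V) ∧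
      (∀ j, (C j : Set (ℕ → E)).Nonempty) ∧
      Pairwise (Disjoint on fun j => (C j : Set (ℕ → E))) := by
  obtain ⟨z, hz⟩ := hV
  obtain ⟨_, ⟨x, m, rfl⟩, hzx, hxV⟩ :=
    (PiNat.isTopologicalBasis_cylinders _).exists_subset_of_mem_open hz V.isOpen
  rw [← PiNat.mem_cylinder_iff_eq.1 hzx] at hxV
  -- `C j` is the set of sequences that agree with `z` before `m + j` and differ from it there
  let w (j : ℕ) : ℕ → E := update z (m + j) (exists_ne (z (m + j))).choose
  have hw (j : ℕ) : w j (m + j) ≠ z (m + j) := by simpa [w] using (exists_ne _).choose_spec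
  have hdisj (j k : ℕ) (hjk : j < k) :
      Disjoint (PiNat.cylinder (w j) (m + j + 1)) (PiNat.cylinder (w k) (m + k + 1)) := by
    refine Set.disjoint_left.2 fun u hj hk => hw j ?_
    rw [← hj (m + j) (by omega), hk (m + j) (by omega)]
    exact update_of_ne (by omega) _ _
  refine ⟨fun j => ⟨PiNat.cylinder (w j) (m + j + 1), PiNat.isClopen_cylinder _ _⟩,
    fun j u hu => hxV fun i hi => ?_, fun j => ⟨w j, PiNat.self_mem_cylinder _ _⟩,
    fun j k hjk => ?_⟩
  · rw [hu i (by omega)]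
    exact update_of_ne (by omega) _ _
  · rcases lt_or_gt_of_ne hjk with h | h
    · exact hdisj j k h
    · exact (hdisj k j h).symm

def cylinderPoint {n : ℕ} (s : Fin n → Bool) : CantorSet :=
  fun i => if h : i < n then s ⟨i, h⟩ else false

lemma cylinderPoint_apply_of_lt {n : ℕ} (s : Fin n → Bool) {i : ℕ} (h : i < n) :
    cylinderPoint s i = s ⟨i, h⟩ :=
  dif_pos h

lemma cylinderPoint_snoc_apply_of_lt {n : ℕ} (s : Fin n → Bool) (b : Bool) {i : ℕ}
    (h : i < n) :
    cylinderPoint (Fin.snoc s b) i = cylinderPoint s i := by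
  rw [cylinderPoint_apply_of_lt _ (by omega), cylinderPoint_apply_of_lt _ h]
  exact Fin.snoc_castSucc (i := ⟨i, h⟩) ..

lemma dense_setOf_dependsOn_Iio : Dense {f : CantorC | ∃ n, DependsOn f (Set.Iio n)} := by
  let A : Subalgebra ℝ CantorC :=
    { carrier := {f | ∃ n, DependsOn f (Set.Iio n)}
      add_mem' := by
        rintro f g ⟨m, hf⟩ ⟨n, hg⟩
        refine ⟨max m n, fun z w h => ?_⟩
        simp only [ContinuousMap.add_apply,
          hf.mono (Set.Iio_subset_Iio (le_max_left m n)) h,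
          hg.mono (Set.Iio_subset_Iio (le_max_right m n)) h]
      mul_mem' := by
        rintro f g ⟨m, hf⟩ ⟨n, hg⟩
        refine ⟨max m n, fun z w h => ?_⟩
        simp only [ContinuousMap.mul_apply,
          hf.mono (Set.Iio_subset_Iio (le_max_left m n)) h,
          hg.mono (Set.Iio_subset_Iio (le_max_right m n)) h]
      algebraMap_mem' := fun r => ⟨0, fun _ _ _ => rfl⟩ }
  have hsep : A.SeparatesPoints := by
    intro z w hzw
    obtain ⟨i, hi⟩ := Function.ne_iff.1 hzw
    let g : CantorC := ⟨fun v => if v i then 1 else 0,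
      (continuous_of_discreteTopology (f := fun b : Bool => if b then (1 : ℝ) else 0)).comp
        (continuous_apply i)⟩
    refine ⟨g, ⟨g, ⟨i + 1, fun v v' h => ?_⟩, rfl⟩, ?_⟩
    · simp [g, h i (Set.mem_Iio.2 (Nat.lt_succ_self i))]
    · cases hz : z i <;> cases hw : w i <;> simp_all [g]
  change Dense (A : Set CantorC)
  rw [dense_iff_closure_eq, ← Subalgebra.topologicalClosure_coe,
    ContinuousMap.subalgebra_topologicalClosure_eq_top_of_separatesPoints A hsep]
  rfl

lemma Fin.sum_snoc_bool {M : Type*} [AddCommMonoid M] (n : ℕ) (F : (Fin (n + 1) → Bool) → M) :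
    ∑ t, F t = ∑ s : Fin n → Bool, (F (Fin.snoc s true) + F (Fin.snoc s false)) := by
  rw [← (Fin.snocEquiv fun _ => Bool).sum_comp, Fintype.sum_prod_type, Fintype.sum_bool,
    ← Finset.sum_add_distrib]
  rfl

section

variable {X : Type*} [NormedAddCommGroup X] [NormedSpace ℝ X] {Y : Submodule ℝ X}

lemma exists_clopen_le_near_submodule (hS : HasSchurProperty (X ⧸ Y)) (T : CantorC →L[ℝ] X)
    {V : Clopens CantorSet} (hV : (V : Set CantorSet).Nonempty) {δ : ℝ} (hδ : 0 < δ) :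
    ∃ B ≤ V, (B : Set CantorSet).Nonempty ∧
      ((V \ B : Clopens CantorSet) : Set CantorSet).Nonempty ∧
      ∃ y ∈ Y, ‖y - T B.indicator‖ < δ := by
  obtain ⟨C, hCV, hCne, hCd⟩ := exists_pairwise_disjoint_clopens_le hV
  have hweak (φ : X →L[ℝ] ℝ) : Tendsto (fun j => φ (T (C j).indicator)) atTop (𝓝 0) :=
    ContinuousMap.tendsto_apply_of_pairwise_disjoint_support (fun j => (C j).norm_indicator_le)
      (by simpa only [onFun, Clopens.support_indicator] using hCd) (φ.comp T)
  obtain ⟨j, hj⟩ :=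
    ((hS.tendsto_infDist_of_weakly_tendsto_zero hweak).eventually (gt_mem_nhds hδ)).exists
  obtain ⟨y, hy, hdist⟩ := (Metric.infDist_lt_iff ⟨0, Y.zero_mem⟩).1 hj
  obtain ⟨u, hu⟩ := hCne (j + 1)
  exact ⟨C j, hCV j, hCne j, ⟨u, hCV (j + 1) hu, Set.disjoint_left.1 (hCd (by omega)) hu⟩,
    y, hy, by rwa [← dist_eq_norm, dist_comm]⟩

structure DyadicApprox (T : CantorC →L[ℝ] X) (Y : Submodule ℝ X) (ε : ℝ) where
  B : (n : ℕ) → (Fin n → Bool) → Clopens CantorSet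
  y : (n : ℕ) → (Fin n → Bool) → X
  nonempty : ∀ n s, (B n s : Set CantorSet).Nonempty
  pairwise_disjoint : ∀ n, Pairwise (Disjoint on B n)
  mem : ∀ n s, y n s ∈ Y
  y_snoc : ∀ n s, y (n + 1) (Fin.snoc s true) + y (n + 1) (Fin.snoc s false) = y n s
  sum_norm_sub_le : ∀ n, ∑ s, ‖y n s - T (B n s).indicator‖ ≤ ε

namespace DyadicApprox

section Embedding

variable {T : CantorC →L[ℝ] X} {ε : ℝ}

lemma nonneg (A : DyadicApprox T Y ε) : 0 ≤ ε :=
  (Finset.sum_nonneg fun _ _ => norm_nonneg _).trans (A.sum_norm_sub_le 0)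

section

variable (A : DyadicApprox T Y ε)

noncomputable def approxOp (n : ℕ) : CantorC →L[ℝ] X :=
  ∑ s, (ContinuousMap.evalCLM ℝ (cylinderPoint s)).smulRight (A.y n s)

lemma approxOp_apply (n : ℕ) (f : CantorC) :
    A.approxOp n f = ∑ s, f (cylinderPoint s) • A.y n s := by
  simp [approxOp]

lemma approxOp_mem (n : ℕ) (f : CantorC) : A.approxOp n f ∈ Y := by
  rw [approxOp_apply]
  exact Y.sum_mem fun s _ => Y.smul_mem _ (A.mem n s)

lemma approxOp_succ_of_dependsOn {n : ℕ} {f : CantorC} (hf : DependsOn f (Set.Iio n)) :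
    A.approxOp (n + 1) f = A.approxOp n f := by
  have hsnoc (s : Fin n → Bool) (b : Bool) :
      f (cylinderPoint (Fin.snoc s b)) = f (cylinderPoint s) :=
    hf fun i hi => cylinderPoint_snoc_apply_of_lt s b hi
  simp only [approxOp_apply, Fin.sum_snoc_bool, hsnoc, ← smul_add, A.y_snoc]

lemma approxOp_eq_of_dependsOn {m n : ℕ} {f : CantorC} (hf : DependsOn f (Set.Iio m))
    (hmn : m ≤ n) : A.approxOp n f = A.approxOp m f := by
  induction n, hmn using Nat.le_induction with
  | base => rfl
  | succ n hmn ih => rw [A.approxOp_succ_of_dependsOn (hf.mono (Set.Iio_subset_Iio hmn)), ih]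

noncomputable def stepFun (n : ℕ) (f : CantorC) : CantorC :=
  ∑ s, f (cylinderPoint s) • (A.B n s).indicator

lemma pairwise_disjoint_support_indicator (n : ℕ) :
    Pairwise (Disjoint on fun s => Function.support (A.B n s).indicator) := fun s t hst => by
  simpa only [onFun, Clopens.support_indicator, Clopens.coe_disjoint] using
    A.pairwise_disjoint n hst

lemma norm_stepFun_le (n : ℕ) (f : CantorC) : ‖A.stepFun n f‖ ≤ ‖f‖ :=
  ContinuousMap.norm_sum_smul_le_of_pairwise_disjoint_support _
    (fun s _ => (A.B n s).norm_indicator_le) (A.pairwise_disjoint_support_indicator n)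
    (norm_nonneg f) fun _ _ => Real.norm_eq_abs (f _) ▸ f.norm_coe_le_norm _

lemma norm_le_norm_stepFun {n : ℕ} {f : CantorC} (hf : DependsOn f (Set.Iio n)) :
    ‖f‖ ≤ ‖A.stepFun n f‖ := by
  refine (ContinuousMap.norm_le _ (norm_nonneg _)).2 fun z => ?_
  set s : Fin n → Bool := fun i => z i
  obtain ⟨w, hw⟩ := A.nonempty n s
  have hfz : f z = f (cylinderPoint s) :=
    hf fun i hi => (cylinderPoint_apply_of_lt s (Set.mem_Iio.1 hi)).symm
  have hstep : A.stepFun n f w = f (cylinderPoint s) := by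
    rw [stepFun, ContinuousMap.sum_apply, Finset.sum_eq_single s]
    · simp [Clopens.coe_indicator, hw]
    · intro t _ hts
      have hwt : w ∉ (A.B n t : Set CantorSet) :=
        Set.disjoint_left.1 (Clopens.coe_disjoint.2 (A.pairwise_disjoint n hts)).symm hw
      simp [Clopens.coe_indicator, hwt]
    · simp
  rw [hfz, ← hstep]
  exact (A.stepFun n f).norm_coe_le_norm w

lemma norm_approxOp_sub_le (n : ℕ) (f : CantorC) :
    ‖A.approxOp n f - T (A.stepFun n f)‖ ≤ ε * ‖f‖ := by
  rw [approxOp_apply, stepFun, map_sum, ← Finset.sum_sub_distrib]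
  calc _ ≤ ∑ s, ‖f (cylinderPoint s) • (A.y n s - T (A.B n s).indicator)‖ := by
        simp only [map_smul, smul_sub]
        exact norm_sum_le _ _
    _ ≤ ∑ s, ‖f‖ * ‖A.y n s - T (A.B n s).indicator‖ := by
        gcongr with s
        rw [norm_smul]
        gcongr
        exact f.norm_coe_le_norm _
    _ ≤ ε * ‖f‖ := by
        rw [← Finset.mul_sum, mul_comm]
        gcongr
        exact A.sum_norm_sub_le n

lemma norm_approxOp_le (n : ℕ) : ‖A.approxOp n‖ ≤ ‖T‖ + ε :=
  ContinuousLinearMap.opNorm_le_bound _ (add_nonneg (norm_nonneg T) A.nonneg) fun f =>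
    calc ‖A.approxOp n f‖
        ≤ ‖A.approxOp n f - T (A.stepFun n f)‖ + ‖T (A.stepFun n f)‖ :=
          norm_le_norm_sub_add _ _
      _ ≤ ε * ‖f‖ + ‖T‖ * ‖f‖ :=
          add_le_add (A.norm_approxOp_sub_le n f)
            ((T.le_opNorm _).trans (by gcongr; exact A.norm_stepFun_le n f))
      _ = (‖T‖ + ε) * ‖f‖ := by ring

lemma sub_mul_norm_le_norm_approxOp {c : ℝ} (hc : 0 ≤ c) (hT : ∀ f, c * ‖f‖ ≤ ‖T f‖)
    {n : ℕ} {f : CantorC} (hf : DependsOn f (Set.Iio n)) :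
    (c - ε) * ‖f‖ ≤ ‖A.approxOp n f‖ :=
  calc (c - ε) * ‖f‖ ≤ c * ‖A.stepFun n f‖ - ε * ‖f‖ := by
        rw [sub_mul]; gcongr; exact A.norm_le_norm_stepFun hf
    _ ≤ ‖T (A.stepFun n f)‖ - ‖A.approxOp n f - T (A.stepFun n f)‖ :=
        sub_le_sub (hT _) (A.norm_approxOp_sub_le n f)
    _ ≤ ‖A.approxOp n f‖ := by
        linarith [norm_sub_norm_le (T (A.stepFun n f)) (A.approxOp n f),
          norm_sub_rev (T (A.stepFun n f)) (A.approxOp n f)]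

lemma cauchySeq_approxOp (f : CantorC) : CauchySeq fun n => A.approxOp n f := by
  refine dense_setOf_dependsOn_Iio.induction (fun g ⟨m, hg⟩ => ?_)
    (Metric.isClosed_setOf_cauchySeq_of_lipschitzWith (K := ⟨‖T‖ + ε, by
      have := A.nonneg; positivity⟩) fun n =>
      ContinuousLinearMap.lipschitzWith_of_opNorm_le (A.norm_approxOp_le n)) f
  exact (tendsto_atTop_of_eventually_const fun n hn => A.approxOp_eq_of_dependsOn hg hn).cauchySeq

lemma exists_tendsto_approxOp [CompleteSpace X] :
    ∃ U : CantorC →L[ℝ] X, ∀ f, Tendsto (fun n => A.approxOp n f) atTop (𝓝 (U f)) := by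
  choose u hu using fun f => cauchySeq_tendsto_of_complete (A.cauchySeq_approxOp f)
  exact ⟨continuousLinearMapOfTendsto A.approxOp (tendsto_pi_nhds.2 hu), hu⟩

end

theorem embeds_submodule (A : DyadicApprox T Y ε) [CompleteSpace X] (hY : IsClosed (Y : Set X))
    {c : ℝ} (hT : ∀ f, c * ‖f‖ ≤ ‖T f‖) (hεc : ε < c) : Embeds CantorC Y := by
  obtain ⟨U, hU⟩ := A.exists_tendsto_approxOp
  have hmem (f : CantorC) : U f ∈ Y :=
    hY.mem_of_tendsto (hU f) (Eventually.of_forall fun n => A.approxOp_mem n f)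
  have hlow (f : CantorC) : (c - ε) * ‖f‖ ≤ ‖U f‖ := by
    refine dense_setOf_dependsOn_Iio.induction (fun g ⟨m, hg⟩ => ?_)
      (isClosed_le (by fun_prop) (by fun_prop)) f
    rw [tendsto_nhds_unique (hU g)
      (tendsto_atTop_of_eventually_const fun n hn => A.approxOp_eq_of_dependsOn hg hn)]
    exact A.sub_mul_norm_le_norm_approxOp (A.nonneg.trans hεc.le) hT hg
  exact ⟨U.codRestrict Y hmem, c - ε, sub_pos.2 hεc, hlow⟩

end Embedding

structure Node (Y : Submodule ℝ X) where
  B : Clopens CantorSet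
  y : X
  nonempty : (B : Set CantorSet).Nonempty
  mem : y ∈ Y

noncomputable def Node.approxError (T : CantorC →L[ℝ] X) (N : Node Y) : ℝ :=
  ‖N.y - T N.B.indicator‖

lemma Node.exists_split (N : Node Y) (hS : HasSchurProperty (X ⧸ Y)) (T : CantorC →L[ℝ] X)
    {δ : ℝ} (hδ : 0 < δ) :
    ∃ c : Bool → Node Y, (c true).B ≤ N.B ∧ (c false).B = N.B \ (c true).B ∧
      (c true).y + (c false).y = N.y ∧ (c true).approxError T < δ := by
  obtain ⟨B, hB, hBne, hcompl, y, hy, hyB⟩ :=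
    exists_clopen_le_near_submodule hS T N.nonempty hδ
  exact ⟨fun b => cond b ⟨B, y, hBne, hy⟩ ⟨N.B \ B, N.y - y, hcompl, Y.sub_mem N.mem hy⟩,
    hB, rfl, add_sub_cancel _ _, hyB⟩

lemma exists_root (hS : HasSchurProperty (X ⧸ Y)) (T : CantorC →L[ℝ] X) {δ : ℝ}
    (hδ : 0 < δ) :
    ∃ N : Node Y, N.approxError T < δ := by
  obtain ⟨B, -, hBne, -, y, hy, hyB⟩ :=
    exists_clopen_le_near_submodule hS T (V := ⊤) ⟨fun _ => false, trivial⟩ hδ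
  exact ⟨⟨B, y, hBne, hy⟩, hyB⟩

section Construction

variable (hS : HasSchurProperty (X ⧸ Y)) (T : CantorC →L[ℝ] X)

noncomputable def Node.split (N : Node Y) {δ : ℝ} (hδ : 0 < δ) : Bool → Node Y :=
  (N.exists_split hS T hδ).choose

lemma Node.split_spec (N : Node Y) {δ : ℝ} (hδ : 0 < δ) :
    (N.split hS T hδ true).B ≤ N.B ∧
      (N.split hS T hδ false).B = N.B \ (N.split hS T hδ true).B ∧
      (N.split hS T hδ true).y + (N.split hS T hδ false).y = N.y ∧
      (N.split hS T hδ true).approxError T < δ :=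
  (N.exists_split hS T hδ).choose_spec

lemma Node.split_le (N : Node Y) {δ : ℝ} (hδ : 0 < δ) (b : Bool) :
    (N.split hS T hδ b).B ≤ N.B := by
  obtain ⟨hle, hB, -⟩ := N.split_spec hS T hδ
  cases b
  · exact hB ▸ sdiff_le
  · exact hle

lemma Node.pairwise_disjoint_split (N : Node Y) {δ : ℝ} (hδ : 0 < δ) :
    Pairwise (Disjoint on fun b => (N.split hS T hδ b).B) := by
  obtain ⟨-, hB, -⟩ := N.split_spec hS T hδ
  have h : Disjoint (N.split hS T hδ true).B (N.split hS T hδ false).B :=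
    hB ▸ disjoint_sdiff_self_right
  intro b b' hbb'
  cases b <;> cases b' <;> first | exact absurd rfl hbb' | exact h | exact h.symm

lemma Node.approxError_split_add_le (N : Node Y) {δ : ℝ} (hδ : 0 < δ) :
    (N.split hS T hδ true).approxError T + (N.split hS T hδ false).approxError T ≤
      N.approxError T + 2 * δ := by
  obtain ⟨hle, hB, hy, hδ'⟩ := N.split_spec hS T hδ
  set N₁ := N.split hS T hδ true
  set N₀ := N.split hS T hδ false
  have : N₀.approxError T ≤ N.approxError T + N₁.approxError T := by
    rw [Node.approxError, hB, Clopens.indicator_sdiff hle, map_sub]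
    calc _ = ‖(N.y - T N.B.indicator) - (N₁.y - T N₁.B.indicator)‖ := by
          rw [← hy]; congr 1; abel
      _ ≤ _ := norm_sub_le _ _
  linarith

/-- The error allowed at a node of level `n`: there are `2 ^ n` of them, so the total error
added at level `n + 1` is `ε / 2 ^ (n + 2)`. -/
noncomputable def levelError (ε : ℝ) (n : ℕ) : ℝ := ε / 2 ^ (2 * n + 3)

lemma levelError_pos {ε : ℝ} (hε : 0 < ε) (n : ℕ) : 0 < levelError ε n := by
  unfold levelError; positivity

variable {ε : ℝ} (hε : 0 < ε)

noncomputable def tree : (n : ℕ) → (Fin n → Bool) → Node Y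
  | 0, _ => (exists_root hS T (half_pos hε)).choose
  | n + 1, t => (tree n (Fin.init t)).split hS T (levelError_pos hε n) (t (Fin.last n))

lemma tree_snoc (n : ℕ) (s : Fin n → Bool) (b : Bool) :
    tree hS T hε (n + 1) (Fin.snoc s b) =
      (tree hS T hε n s).split hS T (levelError_pos hε n) b := by
  simp [tree]

lemma pairwise_disjoint_tree (n : ℕ) :
    Pairwise (Disjoint on fun s => (tree hS T hε n s).B) := by
  induction n with
  | zero => exact fun s t hst => absurd (Subsingleton.elim s t) hst
  | succ n ih =>
    intro s t hst
    rw [onFun, ← Fin.snoc_init_self s, ← Fin.snoc_init_self t, tree_snoc, tree_snoc]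
    by_cases h : Fin.init s = Fin.init t
    · rw [h]
      refine Node.pairwise_disjoint_split hS T _ _ fun hlast => hst ?_
      rw [← Fin.snoc_init_self s, ← Fin.snoc_init_self t, h, hlast]
    · exact (ih h).mono (Node.split_le hS T _ _ _) (Node.split_le hS T _ _ _)

lemma sum_approxError_tree_le (n : ℕ) :
    ∑ s, (tree hS T hε n s).approxError T ≤ ε - ε / 2 ^ (n + 1) := by
  induction n with
  | zero =>
    rw [Fintype.sum_unique, tree, zero_add, pow_one]
    linarith [(exists_root hS T (half_pos hε)).choose_spec]
  | succ n ih =>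
    calc _ ≤ ∑ s : Fin n → Bool,
          ((tree hS T hε n s).approxError T + 2 * levelError ε n) := by
          simp only [Fin.sum_snoc_bool, tree_snoc]
          exact Finset.sum_le_sum fun s _ => Node.approxError_split_add_le hS T _ _
      _ ≤ ε - ε / 2 ^ (n + 1) + 2 ^ n * (2 * levelError ε n) := by
          simp only [Finset.sum_add_distrib, Finset.sum_const, Finset.card_univ, Fintype.card_fun,
            Fintype.card_bool, Fintype.card_fin, nsmul_eq_mul, Nat.cast_pow, Nat.cast_ofNat]
          linarith
      _ = ε - ε / 2 ^ (n + 2) := by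
          rw [levelError, show 2 * n + 3 = (n + 1) + (n + 2) by ring, pow_add]
          field_simp
          ring

end Construction

theorem exists_of_hasSchurProperty (hS : HasSchurProperty (X ⧸ Y)) (T : CantorC →L[ℝ] X)
    {ε : ℝ} (hε : 0 < ε) : Nonempty (DyadicApprox T Y ε) :=
  ⟨{ B := fun n s => (tree hS T hε n s).B
     y := fun n s => (tree hS T hε n s).y
     nonempty := fun n s => (tree hS T hε n s).nonempty
     pairwise_disjoint := pairwise_disjoint_tree hS T hε
     mem := fun n s => (tree hS T hε n s).mem
     y_snoc := fun n s => by
       simp only [tree_snoc]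
       exact (Node.split_spec hS T _ _).2.2.1
     sum_norm_sub_le := fun n =>
       (sum_approxError_tree_le hS T hε n).trans (sub_le_self _ (by positivity)) }⟩

end DyadicApprox

end

/-- **Proposition.** If `Y` is a closed subspace of a Banach space `X` such that the
quotient `X/Y` has the Schur property and `Y` is non-universal (contains no isomorphic
copy of `C(2^ℕ)`), then `X` is non-universal. -/
theorem nonuniversal_of_schur_quotient (X : Type*) [NormedAddCommGroup X]
    [NormedSpace ℝ X] [CompleteSpace X]
    (Y : Submodule ℝ X) (hY : IsClosed (Y : Set X))
    (hSchur : HasSchurProperty (X ⧸ Y)) (hYnu : ¬ Embeds CantorC ↥Y) :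
    ¬ Embeds CantorC X := by
  rintro ⟨T, c, hc, hT⟩
  obtain ⟨A⟩ := DyadicApprox.exists_of_hasSchurProperty hSchur T (half_pos hc)
  exact hYnu (A.embeds_submodule hY hT (half_lt_self hc))
end

section
/- Let (t_n) be the enumeration of 𝒪 according to the bijection h. Then the sequence (f_{t_n}) is a normalized monotone Schauder basis of C(2^ℕ). -/
open Filter Topology MeasureTheory

noncomputable section

/-- The set `𝒪 ⊆ 2^{<ℕ}`: the empty sequence together with all finite
sequences ending with `0` (`false`). -/
def OSet : Set (List Bool) := {l | l = [] ∨ ∃ s : List Bool, l = s ++ [false]}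

/-- `s ≺ t` for nodes of the Cantor tree: `s` and `t` are incomparable and, with
`w = s ∧ t` their longest common initial segment, `w⌢0 ⊑ s` and `w⌢1 ⊑ t`. -/
def PrecBelow (s t : List Bool) : Prop :=
  ∃ w : List Bool, (w ++ [false]) <+: s ∧ (w ++ [true]) <+: t

/-- `t` is the enumeration of `𝒪` according to the canonical bijection `h : 𝒪 → ℕ`,
i.e. `t` is a bijection `ℕ → 𝒪` with `t⁻¹ t₁ < t⁻¹ t₂` whenever `|t₁| < |t₂|`, or
`|t₁| = |t₂|` and `t₁ ≺ t₂`. -/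
def IsOEnum (t : ℕ → List Bool) : Prop :=
  Function.Injective t ∧ Set.range t = OSet ∧
  ∀ m n : ℕ,
    ((t m).length < (t n).length ∨
      ((t m).length = (t n).length ∧ PrecBelow (t m) (t n))) →
    m < n

/-- A dyadic subtree `D = (s_t)_{t ∈ 2^{<ℕ}}` of the Cantor tree: `t₁ ⊏ t₂` iff
`s_{t₁} ⊏ s_{t₂}` and `t₁ ≺ t₂` iff `s_{t₁} ≺ s_{t₂}`. -/
def IsDyadicSubtree (s : List Bool → List Bool) : Prop :=
  ∀ t₁ t₂ : List Bool,
    ((t₁ <+: t₂ ∧ t₁ ≠ t₂) ↔ (s t₁ <+: s t₂ ∧ s t₁ ≠ s t₂)) ∧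
    (PrecBelow t₁ t₂ ↔ PrecBelow (s t₁) (s t₂))

/-- The function `f_t = χ_{V_t} ∈ C(2^ℕ)`: the characteristic function of the clopen
set `V_t = {σ ∈ 2^ℕ : t ⊏ σ}` determined by the node `t ∈ 2^{<ℕ}`. -/
def cylFun (t : List Bool) : CantorC :=
  ⟨fun σ => ∏ i ∈ Finset.range t.length,
      (fun b : Bool => if b = t.getD i false then (1:ℝ) else 0) (σ i), by
    refine continuous_finset_prod _ fun i _ => ?_
    exact (continuous_of_discreteTopology
      (f := fun b : Bool => if b = t.getD i false then (1:ℝ) else 0)).comp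
      (continuous_apply i)⟩

end

/-!
For `u = s⌢0 ∈ 𝒪` the functional `g ↦ g(u⌢1^∞) - g(s⌢1^∞)` (and `g ↦ g(1^∞)` for `u = ∅`)
picks out the coefficient of `f_u`: these functionals are biorthogonal to the `f_u`, `u ∈ 𝒪`.
Since the enumeration is by length, the nodes among `t_0, …, t_{N-1}` that are initial segments
of `σ` form a chain, so the `N`-th partial sum of `g` telescopes to `g(σ|M⌢1^∞)`, where `M` is
the length of the longest of them. Hence the partial sum operators have norm at most one; as
they fix the first `N` basis vectors, this is monotonicity. Moreover `σ|M⌢1^∞` agrees with `σ`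
on any given number of coordinates once `N` is large, so the partial sums converge to `g` by
uniform continuity.
-/

section Biorthogonal

variable {E : Type*} [SeminormedAddCommGroup E] [NormedSpace ℝ E]
  {x : ℕ → E} {c : ℕ → E →L[ℝ] ℝ}

lemma apply_sum_smul_of_biorthogonal (hxc : ∀ m n, c m (x n) = if n = m then 1 else 0)
    (a : ℕ → ℝ) {m n : ℕ} (hnm : n < m) :
    c n (∑ j ∈ Finset.range m, a j • x j) = a n := by
  simp [hxc, Finset.mem_range.mpr hnm]

lemma isSchauderBasis_of_biorthogonal (hxc : ∀ m n, c m (x n) = if n = m then 1 else 0)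
    (hconv : ∀ y, Tendsto (fun N => ∑ n ∈ Finset.range N, c n y • x n) atTop (𝓝 y)) :
    IsSchauderBasis x := by
  refine fun y => ⟨fun n => c n y, hconv y, fun a ha => funext fun j => ?_⟩
  have hlim := ((c j).continuous.tendsto y).comp ha
  refine tendsto_nhds_unique (tendsto_const_nhds.congr' ?_) hlim
  filter_upwards [eventually_gt_atTop j] with m hm
  exact (apply_sum_smul_of_biorthogonal hxc a hm).symm

lemma isMonotoneSeq_of_biorthogonal (hxc : ∀ m n, c m (x n) = if n = m then 1 else 0)
    (hP : ∀ N y, ‖∑ n ∈ Finset.range N, c n y • x n‖ ≤ ‖y‖) :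
    IsMonotoneSeq x := by
  intro a k m hkm
  convert hP k (∑ j ∈ Finset.range m, a j • x j) using 3 with n hn
  rw [apply_sum_smul_of_biorthogonal hxc a ((Finset.mem_range.mp hn).trans_le hkm)]

end Biorthogonal

lemma CantorSet.exists_dist_lt_of_continuous {E : Type*} [PseudoMetricSpace E]
    {f : CantorSet → E} (hf : Continuous f) {ε : ℝ} (hε : 0 < ε) :
    ∃ L, ∀ σ τ : CantorSet, (∀ i < L, σ i = τ i) → dist (f σ) (f τ) < ε := by
  have hU := CompactSpace.uniformContinuous_of_continuous hf (Metric.dist_mem_uniformity hε)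
  simp only [Pi.uniformity, DiscreteUniformity.eq_principal_setRelId, comap_principal] at hU
  obtain ⟨I, hI, hsub⟩ := (hasBasis_iInf_principal_finite _).mem_iff.mp hU
  obtain ⟨L, hL⟩ := hI.bddAbove
  refine ⟨L + 1, fun σ τ hστ => @hsub (σ, τ) ?_⟩
  simp only [Set.mem_iInter]
  intro i hi
  exact hστ i (Nat.lt_succ_of_le (hL hi))

def prefixList (σ : CantorSet) (n : ℕ) : List Bool := List.ofFn fun i : Fin n => σ i

def extendTrue (u : List Bool) : CantorSet := fun i => u.getD i true

noncomputable def coeffCLM (u : List Bool) : CantorC →L[ℝ] ℝ :=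
  if u = [] then ContinuousMap.evalCLM ℝ (extendTrue u)
  else ContinuousMap.evalCLM ℝ (extendTrue u) - ContinuousMap.evalCLM ℝ (extendTrue u.dropLast)

@[simp] lemma length_prefixList (σ : CantorSet) (n : ℕ) : (prefixList σ n).length = n := by
  simp [prefixList]

@[simp] lemma prefixList_zero (σ : CantorSet) : prefixList σ 0 = [] := rfl

lemma prefixList_succ (σ : CantorSet) (n : ℕ) :
    prefixList σ (n + 1) = prefixList σ n ++ [σ n] := by
  rw [prefixList, List.ofFn_succ']
  simp [prefixList]

lemma prefixList_length_eq_iff {u : List Bool} {σ : CantorSet} :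
    prefixList σ u.length = u ↔ ∀ i (hi : i < u.length), σ i = u[i] := by
  simp [prefixList, List.ext_getElem_iff]

lemma extendTrue_prefixList_apply (σ : CantorSet) (n i : ℕ) :
    extendTrue (prefixList σ n) i = if i < n then σ i else true := by
  simp only [extendTrue, prefixList, List.getD_eq_getElem?_getD, List.getElem?_ofFn]
  split_ifs <;> rfl

lemma extendTrue_prefixList_eq_of_forall {σ : CantorSet} {a b : ℕ} (hab : a ≤ b)
    (h : ∀ p, a ≤ p → p < b → σ p = true) :
    extendTrue (prefixList σ a) = extendTrue (prefixList σ b) := by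
  funext i
  simp only [extendTrue_prefixList_apply]
  split_ifs <;> first | rfl | omega | exact (h i (by omega) (by omega)).symm

lemma prefixList_succ_mem_OSet {σ : CantorSet} {p : ℕ} (hp : σ p = false) :
    prefixList σ (p + 1) ∈ OSet :=
  Or.inr ⟨prefixList σ p, by rw [prefixList_succ, hp]⟩

lemma cylFun_apply (u : List Bool) (σ : CantorSet) :
    cylFun u σ = if prefixList σ u.length = u then 1 else 0 := by
  simp only [cylFun, ContinuousMap.coe_mk, Finset.prod_boole, prefixList_length_eq_iff]
  refine if_congr ⟨fun h i hi => ?_, fun h i hi => ?_⟩ rfl rfl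
  · simpa [List.getElem?_eq_getElem hi] using h i (by simpa using hi)
  · have hi := Finset.mem_range.mp hi
    simpa [List.getElem?_eq_getElem hi] using h i hi

lemma norm_cylFun (u : List Bool) : ‖cylFun u‖ = 1 := by
  refine le_antisymm ((ContinuousMap.norm_le _ zero_le_one).2 fun σ => ?_) ?_
  · rw [cylFun_apply]; split_ifs <;> simp
  · have h : cylFun u (extendTrue u) = 1 := by
      rw [cylFun_apply, if_pos (prefixList_length_eq_iff.2 fun i hi => ?_)]
      simp [extendTrue, List.getElem?_eq_getElem hi]
    simpa [h] using ContinuousMap.norm_coe_le_norm (cylFun u) (extendTrue u)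

lemma prefixList_extendTrue_eq_iff {v : List Bool} (hv : v ∈ OSet) (u : List Bool) :
    prefixList (extendTrue u) v.length = v ↔ v <+: u := by
  rw [prefixList_length_eq_iff, List.prefix_iff_getElem]
  constructor
  · intro h
    have hlen : v.length ≤ u.length := by
      rcases hv with rfl | ⟨s, rfl⟩
      · simp
      · by_contra hlt
        simpa [extendTrue, List.getElem?_eq_none (by simp at hlt; omega : u.length ≤ s.length)]
          using h s.length (by simp)
    refine ⟨hlen, fun i hi => ?_⟩
    simpa [extendTrue, List.getElem?_eq_getElem (hi.trans_le hlen)] using (h i hi).symm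
  · rintro ⟨hlen, h⟩ i hi
    simp [extendTrue, List.getElem?_eq_getElem (hi.trans_le hlen), h i hi]

lemma cylFun_extendTrue {v : List Bool} (hv : v ∈ OSet) (u : List Bool) :
    cylFun v (extendTrue u) = if v <+: u then 1 else 0 := by
  simp only [cylFun_apply, prefixList_extendTrue_eq_iff hv]

lemma coeffCLM_cylFun {u v : List Bool} (hu : u ∈ OSet) (hv : v ∈ OSet) :
    coeffCLM u (cylFun v) = if v = u then 1 else 0 := by
  rcases hu with rfl | ⟨s, rfl⟩
  · simp [coeffCLM, cylFun_extendTrue hv]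
  · by_cases hvs : v = s ++ [false]
    · subst hvs
      have : ¬ s ++ [false] <+: s := fun h => by simpa using h.length_le
      simp [coeffCLM, cylFun_extendTrue hv, this]
    · simp [coeffCLM, cylFun_extendTrue hv, List.prefix_concat_iff, hvs]

def longestPrefixLength (t : ℕ → List Bool) (N : ℕ) (σ : CantorSet) : ℕ :=
  ((Finset.range N).filter fun n => prefixList σ (t n).length = t n).sup fun n => (t n).length

lemma length_le_longestPrefixLength {t : ℕ → List Bool} {N n : ℕ} {σ : CantorSet} (hn : n < N)
    (h : prefixList σ (t n).length = t n) : (t n).length ≤ longestPrefixLength t N σ :=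
  Finset.le_sup (f := fun n => (t n).length) (by simp [hn, h])

lemma longestPrefixLength_succ_of_not_prefix {t : ℕ → List Bool} {N : ℕ} {σ : CantorSet}
    (h : prefixList σ (t N).length ≠ t N) :
    longestPrefixLength t (N + 1) σ = longestPrefixLength t N σ := by
  simp [longestPrefixLength, Finset.range_add_one, Finset.filter_insert, h]

namespace IsOEnum

variable {t : ℕ → List Bool} (ht : IsOEnum t)
include ht

lemma mem_OSet (n : ℕ) : t n ∈ OSet := ht.2.1 ▸ Set.mem_range_self n

lemma exists_eq {u : List Bool} (hu : u ∈ OSet) : ∃ n, t n = u := by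
  rwa [← ht.2.1] at hu

lemma lt_of_length_lt {m n : ℕ} (h : (t m).length < (t n).length) : m < n :=
  ht.2.2 m n (Or.inl h)

lemma length_le_length {m n : ℕ} (h : m ≤ n) : (t m).length ≤ (t n).length :=
  not_lt.1 fun hlt => (ht.lt_of_length_lt hlt).not_ge h

lemma zero_eq_nil : t 0 = [] := by
  obtain ⟨k, hk⟩ := ht.exists_eq (Or.inl rfl)
  by_contra h
  have hlt : (t k).length < (t 0).length := by simpa [hk, List.length_pos_iff] using h
  exact Nat.not_lt_zero _ (ht.lt_of_length_lt hlt)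

lemma longestPrefixLength_succ_of_prefix {N : ℕ} {σ : CantorSet}
    (h : prefixList σ (t N).length = t N) :
    longestPrefixLength t (N + 1) σ = (t N).length :=
  le_antisymm
    (Finset.sup_le fun _ hn => ht.length_le_length
      (Nat.lt_succ_iff.mp (Finset.mem_range.mp (Finset.mem_filter.mp hn).1)))
    (length_le_longestPrefixLength N.lt_succ_self h)

lemma extendTrue_longestPrefixLength_eq {N L : ℕ} {σ : CantorSet}
    (h : prefixList σ (t N).length = t N) (hL : (t N).length = L + 1) :
    extendTrue (prefixList σ (longestPrefixLength t N σ)) = extendTrue (prefixList σ L) := by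
  have hlt : longestPrefixLength t N σ < L + 1 := by
    refine (Finset.sup_lt_iff (by simp)).2 fun n hn => ?_
    obtain ⟨hnN, hn⟩ := Finset.mem_filter.mp hn
    refine (hL ▸ ht.length_le_length (Finset.mem_range.mp hnN).le).lt_of_ne fun hlen => ?_
    have : t n = t N := by rw [← hn, ← h, hlen, hL]
    exact (Finset.mem_range.mp hnN).ne (ht.1 this)
  refine extendTrue_prefixList_eq_of_forall (by omega) fun p hMp hpL => ?_
  -- a `0` of `σ` at `p` gives the node `σ|(p+1)`, shorter than `t N`, hence enumerated earlier
  by_contra hp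
  obtain ⟨m, hm⟩ := ht.exists_eq (prefixList_succ_mem_OSet (Bool.not_eq_true _ ▸ hp))
  have hmN : m < N := ht.lt_of_length_lt (by simp [hm, hL]; omega)
  have := length_le_longestPrefixLength (t := t) (σ := σ) hmN (by rw [hm, length_prefixList])
  rw [hm, length_prefixList] at this
  omega

lemma sum_coeffCLM_smul_cylFun_apply (g : CantorC) (σ : CantorSet) {N : ℕ} (hN : 0 < N) :
    (∑ n ∈ Finset.range N, coeffCLM (t n) g • cylFun (t n)) σ =
      g (extendTrue (prefixList σ (longestPrefixLength t N σ))) := by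
  induction N, hN using Nat.le_induction with
  | base =>
    have hM : longestPrefixLength t 1 σ = 0 := by simp [longestPrefixLength, ht.zero_eq_nil]
    simp [ht.zero_eq_nil, hM, coeffCLM, cylFun_apply]
  | succ N hN ih =>
    rw [Finset.sum_range_succ, ContinuousMap.add_apply, ih, ContinuousMap.smul_apply,
      cylFun_apply, smul_eq_mul]
    by_cases hpre : prefixList σ (t N).length = t N
    · obtain ⟨L, hL⟩ : ∃ L, (t N).length = L + 1 :=
        Nat.exists_eq_add_one.mpr (List.length_pos_iff.mpr fun h =>
          Nat.one_le_iff_ne_zero.mp hN (ht.1 (h.trans ht.zero_eq_nil.symm)))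
      have hdrop : (t N).dropLast = prefixList σ L := by
        rw [← hpre, hL, prefixList_succ, List.dropLast_concat]
      have hne : t N ≠ [] := List.ne_nil_of_length_eq_add_one hL
      rw [if_pos hpre, ht.longestPrefixLength_succ_of_prefix hpre,
        ht.extendTrue_longestPrefixLength_eq hpre hL, hpre]
      simp [coeffCLM, hne, hdrop]
    · rw [if_neg hpre, longestPrefixLength_succ_of_not_prefix hpre, mul_zero, add_zero]

lemma norm_sum_coeffCLM_smul_cylFun_le (N : ℕ) (g : CantorC) :
    ‖∑ n ∈ Finset.range N, coeffCLM (t n) g • cylFun (t n)‖ ≤ ‖g‖ := by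
  rcases N.eq_zero_or_pos with rfl | hN
  · simp
  refine (ContinuousMap.norm_le _ (norm_nonneg g)).2 fun σ => ?_
  rw [ht.sum_coeffCLM_smul_cylFun_apply g σ hN]
  exact g.norm_coe_le_norm _

lemma extendTrue_longestPrefixLength_apply {N L i : ℕ} {σ : CantorSet}
    (hN : ∀ n, (t n).length ≤ L → n < N) (hi : i < L) :
    extendTrue (prefixList σ (longestPrefixLength t N σ)) i = σ i := by
  rw [extendTrue_prefixList_apply]
  split_ifs with hiM
  · rfl
  cases hσ : σ i
  · obtain ⟨m, hm⟩ := ht.exists_eq (prefixList_succ_mem_OSet hσ)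
    have := length_le_longestPrefixLength (t := t) (σ := σ)
      (hN m (by rw [hm, length_prefixList]; omega)) (by rw [hm, length_prefixList])
    rw [hm, length_prefixList] at this
    omega
  · rfl

lemma tendsto_sum_coeffCLM_smul_cylFun (g : CantorC) :
    Tendsto (fun N => ∑ n ∈ Finset.range N, coeffCLM (t n) g • cylFun (t n)) atTop (𝓝 g) := by
  rw [Metric.tendsto_atTop]
  intro ε hε
  obtain ⟨L, hL⟩ := CantorSet.exists_dist_lt_of_continuous g.continuous hε
  obtain ⟨N₀, hN₀⟩ : ∃ N₀, ∀ n, (t n).length ≤ L → n ≤ N₀ :=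
    ((List.finite_length_le Bool L).preimage ht.1.injOn).bddAbove
  refine ⟨N₀ + 1, fun N hN => (ContinuousMap.dist_lt_iff hε).2 fun σ => ?_⟩
  rw [ht.sum_coeffCLM_smul_cylFun_apply g σ (by omega)]
  exact hL _ _ fun i hi =>
    ht.extendTrue_longestPrefixLength_apply (fun n hn => by have := hN₀ n hn; omega) hi

end IsOEnum

/-- **Claim.** If `(t_n)` is the enumeration of `𝒪` according to the bijection `h`,
then `(f_{t_n})` is a normalized monotone Schauder basis of `C(2^ℕ)`. -/
theorem cylFun_enum_is_normalized_monotone_basis (t : ℕ → List Bool) (ht : IsOEnum t) :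
    (∀ n : ℕ, ‖cylFun (t n)‖ = 1) ∧
    IsSchauderBasis (fun n => cylFun (t n)) ∧
    IsMonotoneSeq (fun n => cylFun (t n)) := by
  have hbiorth : ∀ m n, coeffCLM (t m) (cylFun (t n)) = if n = m then 1 else 0 := fun m n => by
    simp only [coeffCLM_cylFun (ht.mem_OSet m) (ht.mem_OSet n), ht.1.eq_iff]
  exact ⟨fun n => norm_cylFun (t n),
    isSchauderBasis_of_biorthogonal hbiorth ht.tendsto_sum_coeffCLM_smul_cylFun,
    isMonotoneSeq_of_biorthogonal hbiorth ht.norm_sum_coeffCLM_smul_cylFun_le⟩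
end

section
/- Let B and X be Banach spaces, 0 < η ≤ 1, S a closed subspace of B, and u : S → X a bounded linear operator with ‖u‖ ≤ η. Let X₁, j and ũ be as in the canonical triple associated to (B, S, u, X, η). Then j is an isometric embedding, ‖ũ‖ ≤ 1, ũ(s) = j(u(s)) for every s ∈ S, and the quotient spaces B/S and X₁/j(X) are isometrically isomorphic. -/
open Filter Topology MeasureTheory

noncomputable section

variable (B X : Type*) [NormedAddCommGroup B] [NormedSpace ℝ B]
  [NormedAddCommGroup X] [NormedSpace ℝ X]

/-- The subspace `N = {(s, -u(s)) : s ∈ S}` of `B ⊕₁ X` (where `B ⊕₁ X` is `B × X`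
with the norm `‖(b,x)‖ = ‖b‖ + ‖x‖`). -/
def kislyakovKernel (S : Submodule ℝ B) (u : ↥S →L[ℝ] X) :
    Submodule ℝ (WithLp 1 (B × X)) :=
  Submodule.comap ((WithLp.linearEquiv 1 ℝ (B × X)).toLinearMap)
    (LinearMap.range (LinearMap.prod S.subtype (-(u : ↥S →ₗ[ℝ] X))))

/-- The space `X₁ = (B ⊕₁ X)/N` of the canonical triple associated to `(B,S,u,X,η)`. -/
abbrev canonX1 (S : Submodule ℝ B) (u : ↥S →L[ℝ] X) : Type _ :=
  WithLp 1 (B × X) ⧸ kislyakovKernel B X S u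

/-- The map `j : X → X₁`, `j(x) = Q((0,x))`, of the canonical triple. -/
def canonJ (S : Submodule ℝ B) (u : ↥S →L[ℝ] X) : X →ₗ[ℝ] canonX1 B X S u :=
  (kislyakovKernel B X S u).mkQ ∘ₗ
    ((WithLp.linearEquiv 1 ℝ (B × X)).symm.toLinearMap ∘ₗ LinearMap.inr ℝ B X)

/-- The map `ũ : B → X₁`, `ũ(b) = Q((b,0))`, of the canonical triple. -/
def canonU (S : Submodule ℝ B) (u : ↥S →L[ℝ] X) : B →ₗ[ℝ] canonX1 B X S u :=
  (kislyakovKernel B X S u).mkQ ∘ₗ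
    ((WithLp.linearEquiv 1 ℝ (B × X)).symm.toLinearMap ∘ₗ LinearMap.inl ℝ B X)

end

/-! Since `‖u‖ ≤ 1`, every representative `(s, x - u s)` of `j x` in `B ⊕₁ X` has norm
`‖s‖ + ‖x - u s‖ ≥ ‖u s‖ + ‖x - u s‖ ≥ ‖x‖`, so `j` is isometric. Both `B ⧸ S` and `X₁ ⧸ j(X)`
are the quotient of `B ⊕₁ X` by `S × X`: the maps between them induced by `ũ` and by the first
projection are mutually inverse contractions, hence isometries. -/

section QuotientNorm

variable {R M N : Type*} [Ring R] [SeminormedAddCommGroup M] [Module R M]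
  [SeminormedAddCommGroup N] [Module R N] {S : Submodule R M}

theorem Submodule.Quotient.le_norm_iff {x : M ⧸ S} {r : ℝ} :
    r ≤ ‖x‖ ↔ ∀ m : M, Submodule.Quotient.mk m = x → r ≤ ‖m‖ :=
  QuotientAddGroup.le_norm_iff

theorem Submodule.norm_liftQ_apply_le (f : M →ₗ[R] N) (hS : S ≤ LinearMap.ker f)
    (hf : ∀ m, ‖f m‖ ≤ ‖m‖) (x : M ⧸ S) : ‖S.liftQ f hS x‖ ≤ ‖x‖ :=
  Submodule.Quotient.le_norm_iff.2 fun m hm => hm ▸ hf m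

end QuotientNorm

namespace CanonicalTriple

variable {B X : Type*} [NormedAddCommGroup B] [NormedSpace ℝ B]
  [NormedAddCommGroup X] [NormedSpace ℝ X] (S : Submodule ℝ B) (u : ↥S →L[ℝ] X)

theorem mem_kislyakovKernel {z : WithLp 1 (B × X)} :
    z ∈ kislyakovKernel B X S u ↔ ∃ s : S, WithLp.toLp 1 ((s : B), -u s) = z := by
  simp only [kislyakovKernel, Submodule.mem_comap, LinearMap.mem_range, LinearMap.prod_apply]
  exact exists_congr fun s => (WithLp.equiv 1 (B × X)).symm_apply_eq.symm

theorem canonU_apply (b : B) :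
    canonU B X S u b = Submodule.Quotient.mk (WithLp.toLp 1 (b, 0)) := rfl

theorem canonJ_apply (x : X) :
    canonJ B X S u x = Submodule.Quotient.mk (WithLp.toLp 1 (0, x)) := rfl

theorem mk_eq_canonU_add_canonJ (z : WithLp 1 (B × X)) :
    Submodule.Quotient.mk z = canonU B X S u z.fst + canonJ B X S u z.snd := by
  rw [canonU_apply, canonJ_apply, ← Submodule.Quotient.mk_add, ← WithLp.toLp_add]
  simp only [Prod.mk_add_mk, add_zero, zero_add]
  rfl

theorem canonU_coe (s : S) : canonU B X S u s = canonJ B X S u (u s) := by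
  rw [canonU_apply, canonJ_apply, Submodule.Quotient.eq, mem_kislyakovKernel]
  exact ⟨s, by rw [← WithLp.toLp_sub]; simp⟩

theorem norm_canonU_le (b : B) : ‖canonU B X S u b‖ ≤ ‖b‖ :=
  (Submodule.Quotient.norm_mk_le _ _).trans (by simp)

theorem norm_canonJ (hu : ‖u‖ ≤ 1) (x : X) : ‖canonJ B X S u x‖ = ‖x‖ := by
  refine le_antisymm ((Submodule.Quotient.norm_mk_le _ _).trans (by simp))
    (Submodule.Quotient.le_norm_iff.2 fun z hz => ?_)
  rw [canonJ_apply, Submodule.Quotient.eq, mem_kislyakovKernel] at hz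
  obtain ⟨s, hs⟩ := hz
  have hz_eq : z = WithLp.toLp 1 ((s : B), x - u s) := by
    rw [← sub_add_cancel z (WithLp.toLp 1 (0, x)), ← hs, ← WithLp.toLp_add, Prod.mk_add_mk,
      add_zero, neg_add_eq_sub]
  have hus : ‖u s‖ ≤ ‖(s : B)‖ :=
    (u.le_opNorm s).trans (mul_le_of_le_one_left (norm_nonneg _) hu)
  calc ‖x‖ ≤ ‖u s‖ + ‖x - u s‖ := norm_le_norm_add_norm_sub' x (u s)
    _ ≤ ‖(s : B)‖ + ‖x - u s‖ := by gcongr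
    _ = ‖z‖ := by rw [hz_eq, WithLp.prod_norm_eq_of_L1]; rfl

noncomputable def quotientMap :
    (B ⧸ S) →ₗ[ℝ] (canonX1 B X S u ⧸ LinearMap.range (canonJ B X S u)) :=
  S.liftQ ((LinearMap.range (canonJ B X S u)).mkQ ∘ₗ canonU B X S u) fun b hb =>
    (Submodule.Quotient.mk_eq_zero _).2 ⟨u ⟨b, hb⟩, (canonU_coe S u ⟨b, hb⟩).symm⟩

noncomputable def quotientInv :
    (canonX1 B X S u ⧸ LinearMap.range (canonJ B X S u)) →ₗ[ℝ] (B ⧸ S) :=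
  (LinearMap.range (canonJ B X S u)).liftQ
    ((kislyakovKernel B X S u).liftQ
      (S.mkQ ∘ₗ LinearMap.fst ℝ B X ∘ₗ (WithLp.linearEquiv 1 ℝ (B × X)).toLinearMap)
      fun z hz => by
        obtain ⟨s, rfl⟩ := (mem_kislyakovKernel S u).1 hz
        exact (Submodule.Quotient.mk_eq_zero _).2 s.2)
    (by
      rintro _ ⟨x, rfl⟩
      exact (Submodule.Quotient.mk_eq_zero _).2 S.zero_mem)

theorem quotientInv_comp_quotientMap : quotientInv S u ∘ₗ quotientMap S u = LinearMap.id :=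
  Submodule.linearMap_qext _ rfl

theorem quotientMap_comp_quotientInv : quotientMap S u ∘ₗ quotientInv S u = LinearMap.id := by
  refine Submodule.linearMap_qext _ (Submodule.linearMap_qext _ (LinearMap.ext fun z => ?_))
  change Submodule.Quotient.mk (canonU B X S u z.fst) =
    Submodule.Quotient.mk (Submodule.Quotient.mk z)
  rw [mk_eq_canonU_add_canonJ S u z, Submodule.Quotient.mk_add,
    (Submodule.Quotient.mk_eq_zero _).2 (LinearMap.mem_range_self _ _), add_zero]

theorem norm_quotientMap_le (y : B ⧸ S) : ‖quotientMap S u y‖ ≤ ‖y‖ :=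
  Submodule.norm_liftQ_apply_le (N := canonX1 B X S u ⧸ LinearMap.range (canonJ B X S u)) _ _
    (fun b => (Submodule.Quotient.norm_mk_le _ _).trans (norm_canonU_le S u b)) y

theorem norm_quotientInv_le (y : canonX1 B X S u ⧸ LinearMap.range (canonJ B X S u)) :
    ‖quotientInv S u y‖ ≤ ‖y‖ := by
  refine Submodule.norm_liftQ_apply_le (N := B ⧸ S) _ _ ?_ y
  refine Submodule.norm_liftQ_apply_le (N := B ⧸ S) _ _ fun z => ?_
  exact (Submodule.Quotient.norm_mk_le _ _).trans (WithLp.norm_fst_le B z)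

noncomputable def quotientIsometryEquiv :
    (B ⧸ S) ≃ₗᵢ[ℝ] (canonX1 B X S u ⧸ LinearMap.range (canonJ B X S u)) where
  toLinearEquiv := LinearEquiv.ofLinearMap (quotientMap S u) (quotientInv S u)
    (quotientMap_comp_quotientInv S u) (quotientInv_comp_quotientMap S u)
  norm_map' y := le_antisymm (norm_quotientMap_le S u y) <| by
    simpa [← LinearMap.comp_apply, quotientInv_comp_quotientMap] using
      norm_quotientInv_le S u (quotientMap S u y)

end CanonicalTriple

theorem canonical_triple_properties_general (B X : Type*) [NormedAddCommGroup B]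
    [NormedSpace ℝ B] [NormedAddCommGroup X] [NormedSpace ℝ X]
    (S : Submodule ℝ B)
    (η : ℝ) (hη1 : η ≤ 1)
    (u : ↥S →L[ℝ] X) (hu : ‖u‖ ≤ η) :
    (∀ v : X, ‖canonJ B X S u v‖ = ‖v‖) ∧
    (∀ b : B, ‖canonU B X S u b‖ ≤ ‖b‖) ∧
    (∀ s : ↥S, canonU B X S u (s : B) = canonJ B X S u (u s)) ∧
    Nonempty ((B ⧸ S) ≃ₗᵢ[ℝ]
      (canonX1 B X S u ⧸ LinearMap.range (canonJ B X S u))) :=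
  ⟨CanonicalTriple.norm_canonJ S u (hu.trans hη1), CanonicalTriple.norm_canonU_le S u,
    CanonicalTriple.canonU_coe S u, ⟨CanonicalTriple.quotientIsometryEquiv S u⟩⟩

/-- **Proposition (Kisliakov).** For the canonical triple `(X₁, j, ũ)` associated to
`(B, S, u, X, η)`: `j` is an isometric embedding, `‖ũ‖ ≤ 1`, `ũ(s) = j(u(s))` for
`s ∈ S`, and `B/S` and `X₁/j(X)` are isometrically isomorphic. -/
theorem canonical_triple_properties (B X : Type*) [NormedAddCommGroup B]
    [NormedSpace ℝ B] [NormedAddCommGroup X] [NormedSpace ℝ X]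
    (S : Submodule ℝ B) (hS : IsClosed (S : Set B))
    (η : ℝ) (hη0 : 0 < η) (hη1 : η ≤ 1)
    (u : ↥S →L[ℝ] X) (hu : ‖u‖ ≤ η) :
    (∀ v : X, ‖canonJ B X S u v‖ = ‖v‖) ∧
    (∀ b : B, ‖canonU B X S u b‖ ≤ ‖b‖) ∧
    (∀ s : ↥S, canonU B X S u (s : B) = canonJ B X S u (u s)) ∧
    Nonempty ((B ⧸ S) ≃ₗᵢ[ℝ]
      (canonX1 B X S u ⧸ LinearMap.range (canonJ B X S u))) :=
  canonical_triple_properties_general B X S η hη1 u hu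
end

section
/- Let B and X be Banach spaces, 0 < η ≤ 1, S a closed subspace of B, and u : S → X a bounded linear operator with ‖u‖ ≤ η. Suppose there exists 0 < δ ≤ 1 such that ‖u(s)‖ ≥ δ‖s‖ for every s ∈ S. Then, for the canonical triple (X₁, j, ũ) associated to (B, S, u, X, η), we have ‖ũ(b)‖ ≥ δ‖b‖ for every b ∈ B. -/
open Filter Topology MeasureTheory

section CanonicalTriple

variable {B X : Type*} [NormedAddCommGroup B] [NormedSpace ℝ B]
  [NormedAddCommGroup X] [NormedSpace ℝ X] {S : Submodule ℝ B} {u : ↥S →L[ℝ] X}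

theorem mem_kislyakovKernel_iff {z : WithLp 1 (B × X)} :
    z ∈ kislyakovKernel B X S u ↔ ∃ s : S, z.ofLp = ((s : B), -u s) := by
  simp [kislyakovKernel, eq_comm]

theorem canonU_apply (b : B) :
    canonU B X S u b = Submodule.Quotient.mk (WithLp.toLp 1 (b, (0 : X))) := rfl

theorem le_norm_canonU_iff {b : B} {c : ℝ} :
    c ≤ ‖canonU B X S u b‖ ↔ ∀ s : S, c ≤ ‖b - s‖ + ‖u s‖ := by
  have hdist (s : S) :
      dist (WithLp.toLp 1 (b, (0 : X))) (WithLp.toLp 1 ((s : B), -u s)) = ‖b - s‖ + ‖u s‖ := by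
    rw [WithLp.prod_dist_eq_of_L1]; simp [dist_eq_norm]
  rw [canonU_apply]
  erw [QuotientAddGroup.norm_mk]
  rw [Metric.le_infDist ⟨0, zero_mem (kislyakovKernel B X S u).toAddSubgroup⟩]
  constructor
  · intro h s
    rw [← hdist]
    exact h (mem_kislyakovKernel_iff.2 ⟨s, rfl⟩)
  · rintro h z hz
    obtain ⟨s, hs⟩ := mem_kislyakovKernel_iff.1 hz
    rw [← WithLp.toLp_ofLp (p := 1) z, hs, hdist]
    exact h s

end CanonicalTriple

theorem canonical_triple_lower_bound_general (B X : Type*) [NormedAddCommGroup B]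
    [NormedSpace ℝ B] [NormedAddCommGroup X] [NormedSpace ℝ X]
    (S : Submodule ℝ B)
    (u : ↥S →L[ℝ] X)
    (δ : ℝ) (hδ0 : 0 < δ) (hδ1 : δ ≤ 1)
    (hlow : ∀ s : ↥S, δ * ‖s‖ ≤ ‖u s‖) :
    ∀ b : B, δ * ‖b‖ ≤ ‖canonU B X S u b‖ := by
  intro b
  refine le_norm_canonU_iff.2 fun s => ?_
  calc δ * ‖b‖ ≤ δ * ‖b - s‖ + δ * ‖s‖ := by
        rw [← mul_add]
        exact mul_le_mul_of_nonneg_left (norm_le_norm_sub_add b s) hδ0.le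
    _ ≤ ‖b - s‖ + ‖u s‖ := by
        gcongr
        · exact mul_le_of_le_one_left (norm_nonneg _) hδ1
        · exact hlow s

/-- **Remark (Bourgain-Pisier).** If moreover `‖u(s)‖ ≥ δ‖s‖` for all `s ∈ S`
(for some `0 < δ ≤ 1`), then `‖ũ(b)‖ ≥ δ‖b‖` for every `b ∈ B`. -/
theorem canonical_triple_lower_bound (B X : Type*) [NormedAddCommGroup B]
    [NormedSpace ℝ B] [NormedAddCommGroup X] [NormedSpace ℝ X]
    (S : Submodule ℝ B) (hS : IsClosed (S : Set B))
    (η : ℝ) (hη0 : 0 < η) (hη1 : η ≤ 1)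
    (u : ↥S →L[ℝ] X) (hu : ‖u‖ ≤ η)
    (δ : ℝ) (hδ0 : 0 < δ) (hδ1 : δ ≤ 1)
    (hlow : ∀ s : ↥S, δ * ‖s‖ ≤ ‖u s‖) :
    ∀ b : B, δ * ‖b‖ ≤ ‖canonU B X S u b‖ :=
  canonical_triple_lower_bound_general B X S u δ hδ0 hδ1 hlow
end
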